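/- arXiv:2009.07805 — 2 statements merged into one kernel-verified Lean document; each statement's English description precedes it below -/
import Mathlib

section
/- Let (Ω, ℱ, P) be a probability space, let k be a positive natural number, and let Y, X₁, …, X_k be L² random variables on Ω such that X₁, …, X_k are essentially linearly independent, i.e. Var(∑_{j=1}^k a_j X_j) > 0 for every nonzero a ∈ ℝ^k. Then there is exactly one β ∈ ℝ^k and exactly one L² random variable ε on Ω such that Y = ∑_{j=1}^k X_j β_j + ε almost surely and E[X_j ε] = 0 for all 1 ≤ j ≤ k. -/
/-!
Let `G = (E[Xᵢ Xⱼ])` be the Gram matrix of the regressors and `c = (E[Xⱼ Y])`. For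
`ε = Y - ∑ Xⱼ βⱼ` the orthogonality conditions `E[Xⱼ ε] = 0` are exactly the normal equations
`G β = c`. Since `aᵀ G a = E[(∑ aⱼ Xⱼ)²] ≥ Var(∑ aⱼ Xⱼ) > 0` for `a ≠ 0`, `G` is positive
definite, hence invertible, so the normal equations have exactly one solution, and `ε` is then
determined almost surely by `Y = ∑ Xⱼ βⱼ + ε`.
-/

open MeasureTheory ProbabilityTheory Matrix

namespace Regression

variable {Ω ι : Type*} [MeasurableSpace Ω] {P : Measure Ω} [Fintype ι] {X : ι → Ω → ℝ}

noncomputable def momentMatrix (P : Measure Ω) (X : ι → Ω → ℝ) : Matrix ι ι ℝ :=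
  Matrix.of fun i j => ∫ ω, X i ω * X j ω ∂P

noncomputable def crossMoments (P : Measure Ω) (X : ι → Ω → ℝ) (Y : Ω → ℝ) : ι → ℝ :=
  fun j => ∫ ω, X j ω * Y ω ∂P

omit [Fintype ι] in
lemma momentMatrix_isHermitian : (momentMatrix P X).IsHermitian := by
  ext i j
  simp only [conjTranspose_apply, momentMatrix, of_apply, star_trivial, mul_comm]

lemma memLp_sum_mul (hX : ∀ j, MemLp (X j) 2 P) (b : ι → ℝ) :
    MemLp (fun ω => ∑ j, X j ω * b j) 2 P :=
  memLp_finsetSum _ fun j _ => (hX j).mul_const (b j)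

lemma integral_mul_sum_mul (hX : ∀ j, MemLp (X j) 2 P) (b : ι → ℝ) (j : ι) :
    ∫ ω, X j ω * ∑ i, X i ω * b i ∂P = (momentMatrix P X *ᵥ b) j := by
  have hint : ∀ i, Integrable (fun ω => X j ω * X i ω) P := fun i => (hX j).integrable_mul (hX i)
  simp_rw [Finset.mul_sum, ← mul_assoc]
  rw [integral_finsetSum _ fun i _ => (hint i).mul_const (b i)]
  simp only [integral_mul_const, mulVec, dotProduct, momentMatrix, of_apply]

lemma dotProduct_momentMatrix_mulVec (hX : ∀ j, MemLp (X j) 2 P) (a : ι → ℝ) :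
    a ⬝ᵥ momentMatrix P X *ᵥ a = ∫ ω, (∑ j, a j * X j ω) ^ 2 ∂P := by
  have hsq : ∀ ω, (∑ j, a j * X j ω) ^ 2 = ∑ j, a j * (X j ω * ∑ i, X i ω * a i) := by
    intro ω
    simp_rw [sq, Finset.sum_mul, Finset.mul_sum]
    exact Finset.sum_congr rfl fun _ _ => Finset.sum_congr rfl fun _ _ => by ring
  have hint : ∀ j, Integrable (fun ω => X j ω * ∑ i, X i ω * a i) P :=
    fun j => (hX j).integrable_mul (memLp_sum_mul hX a)
  simp_rw [hsq]
  rw [integral_finsetSum _ fun j _ => (hint j).const_mul (a j)]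
  simp only [integral_const_mul, integral_mul_sum_mul hX, dotProduct]

lemma momentMatrix_posDef [IsProbabilityMeasure P] (hX : ∀ j, MemLp (X j) 2 P)
    (hli : ∀ a : ι → ℝ, a ≠ 0 → 0 < variance (fun ω => ∑ j, a j * X j ω) P) :
    (momentMatrix P X).PosDef := by
  refine .of_dotProduct_mulVec_pos momentMatrix_isHermitian fun a ha => ?_
  have hmeas : AEStronglyMeasurable (fun ω => ∑ j, a j * X j ω) P :=
    (memLp_finsetSum _ fun j _ => (hX j).const_mul (a j)).aestronglyMeasurable
  rw [star_trivial, dotProduct_momentMatrix_mulVec hX]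
  exact (hli a ha).trans_le (variance_le_expectation_sq hmeas)

lemma integral_mul_sub_sum_mul {Y : Ω → ℝ} (hY : MemLp Y 2 P) (hX : ∀ j, MemLp (X j) 2 P)
    (β : ι → ℝ) (j : ι) :
    ∫ ω, X j ω * (Y ω - ∑ i, X i ω * β i) ∂P
      = crossMoments P X Y j - (momentMatrix P X *ᵥ β) j := by
  have hXY : Integrable (fun ω => X j ω * Y ω) P := (hX j).integrable_mul hY
  have hXXβ : Integrable (fun ω => X j ω * ∑ i, X i ω * β i) P :=
    (hX j).integrable_mul (memLp_sum_mul hX β)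
  simp_rw [mul_sub]
  rw [integral_sub hXY hXXβ, integral_mul_sum_mul hX, crossMoments]

end Regression

open Regression

theorem stmt3_general {Ω : Type*} [MeasurableSpace Ω] (P : Measure Ω) [IsProbabilityMeasure P]
    (k : ℕ) (Y : Ω → ℝ) (X : Fin k → Ω → ℝ)
    (hY : MemLp Y 2 P) (hX : ∀ j, MemLp (X j) 2 P)
    (hli : ∀ a : Fin k → ℝ, a ≠ 0 →
      0 < variance (fun ω => ∑ j, a j * X j ω) P) :
    ∃ (β : Fin k → ℝ) (ε : Ω → ℝ),
      MemLp ε 2 P ∧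
      (Y =ᵐ[P] fun ω => (∑ j, X j ω * β j) + ε ω) ∧
      (∀ j, ∫ ω, X j ω * ε ω ∂P = 0) ∧
      ∀ (β' : Fin k → ℝ) (ε' : Ω → ℝ), MemLp ε' 2 P →
        (Y =ᵐ[P] fun ω => (∑ j, X j ω * β' j) + ε' ω) →
        (∀ j, ∫ ω, X j ω * ε' ω ∂P = 0) →
        β' = β ∧ ε' =ᵐ[P] ε := by
  have hG : IsUnit (momentMatrix P X) := (momentMatrix_posDef hX hli).isUnit
  obtain ⟨β, hβ⟩ := mulVec_surjective_iff_isUnit.mpr hG (crossMoments P X Y)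
  refine ⟨β, fun ω => Y ω - ∑ j, X j ω * β j, hY.sub (memLp_sum_mul hX β),
    ae_of_all _ fun ω => by ring, fun j => ?_, fun β' ε' _ hY' horth' => ?_⟩
  · rw [integral_mul_sub_sum_mul hY hX, hβ, sub_self]
  have hε' : ε' =ᵐ[P] fun ω => Y ω - ∑ j, X j ω * β' j :=
    hY'.mono fun ω h => by simp only [h]; ring
  have hβ' : momentMatrix P X *ᵥ β' = crossMoments P X Y := by
    funext j
    rw [eq_comm, ← sub_eq_zero, ← integral_mul_sub_sum_mul hY hX, ← horth' j]
    exact integral_congr_ae (hε'.mono fun ω h => by simp only [h])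
  obtain rfl : β' = β := mulVec_injective_iff_isUnit.mpr hG (hβ'.trans hβ.symm)
  exact ⟨rfl, hε'⟩

/-- **Theorem 2 ("strengthened" Proposition 1).**
If `Y, X₁, …, X_k` are L² random variables and `X₁, …, X_k` are essentially linearly
independent, then there exist exactly one `β ∈ ℝᵏ` and exactly one (up to a.e. equality)
L² random variable `ε` with `Y = ∑ j, X j * β j + ε` a.s. and `E[X j * ε] = 0` for all
`j`. -/
theorem stmt3 {Ω : Type*} [MeasurableSpace Ω] (P : Measure Ω) [IsProbabilityMeasure P]
    (k : ℕ) (hk : 0 < k) (Y : Ω → ℝ) (X : Fin k → Ω → ℝ)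
    (hY : MemLp Y 2 P) (hX : ∀ j, MemLp (X j) 2 P)
    (hli : ∀ a : Fin k → ℝ, a ≠ 0 →
      0 < variance (fun ω => ∑ j, a j * X j ω) P) :
    ∃ (β : Fin k → ℝ) (ε : Ω → ℝ),
      MemLp ε 2 P ∧
      (Y =ᵐ[P] fun ω => (∑ j, X j ω * β j) + ε ω) ∧
      (∀ j, ∫ ω, X j ω * ε ω ∂P = 0) ∧
      ∀ (β' : Fin k → ℝ) (ε' : Ω → ℝ), MemLp ε' 2 P →
        (Y =ᵐ[P] fun ω => (∑ j, X j ω * β' j) + ε' ω) →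
        (∀ j, ∫ ω, X j ω * ε' ω ∂P = 0) →
        β' = β ∧ ε' =ᵐ[P] ε :=
  stmt3_general P k Y X hY hX hli
end

section
/- Let k be a positive natural number. For each β ∈ ℝ^k, let 𝒮_β be the set of probability measures ℙ on the Borel σ-algebra of ℝ^{1+k} such that (i) the coordinate projections (π₁, …, π_{k+1}) form a fundamental random vector on (ℝ^{1+k}, Borel, ℙ) and (ii) the random variable η := π₁ − ∑_{j=2}^{k+1} π_j β_{j−1} is L²(ℙ) and satisfies ∫ π_j η dℙ = 0 for all 2 ≤ j ≤ k+1. Then: (a) for all β, β' ∈ ℝ^k with β ≠ β', the sets 𝒮_β and 𝒮_{β'} are disjoint; and (b) 𝓜_reg^{1,k} = ⋃_{β ∈ ℝ^k} 𝒮_β. -/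
open MeasureTheory ProbabilityTheory

/-- A random vector `(Y, X₁, …, X_k)` is a *fundamental random vector* iff each
component is L², no `X j` is almost surely `0`, and the `X j` are pairwise
orthogonal. -/
def IsFundamentalRandomVector {Ω : Type*} [MeasurableSpace Ω] (P : Measure Ω) {k : ℕ}
    (Y : Ω → ℝ) (X : Fin k → Ω → ℝ) : Prop :=
  MemLp Y 2 P ∧ (∀ j, MemLp (X j) 2 P) ∧ (∀ j, ¬ (X j =ᵐ[P] 0)) ∧
    ∀ j j', j ≠ j' → ∫ ω, X j ω * X j' ω ∂P = 0

/-- The *stochastic linear regression model* `𝓜_reg^{1,k}`. -/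
def Mreg (k : ℕ) : Set (Measure (Fin (k + 1) → ℝ)) :=
  {P | IsProbabilityMeasure P ∧
    (∀ j : Fin k, P {x | x j.succ = 0} < 1) ∧
    (∀ j : Fin (k + 1), MemLp (fun x => x j) 2 P) ∧
    ∀ j j' : Fin k, j ≠ j' → ∫ x, x j.succ * x j'.succ ∂P = 0}

/-- `𝒮_β`: the set of Borel probability measures `P` on `ℝ^{1+k}` such that the
coordinate projections form a fundamental random vector on `(ℝ^{1+k}, Borel, P)` and
`η := π₁ − ∑ j, π_{j+1} β_j` is L²(P) and orthogonal to every covariate coordinate. -/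
def Sset (k : ℕ) (β : Fin k → ℝ) : Set (Measure (Fin (k + 1) → ℝ)) :=
  {P | IsProbabilityMeasure P ∧
    IsFundamentalRandomVector P (fun x => x 0) (fun j x => x j.succ) ∧
    MemLp (fun x => x 0 - ∑ j, x j.succ * β j) 2 P ∧
    ∀ j : Fin k, ∫ x, x j.succ * (x 0 - ∑ i, x i.succ * β i) ∂P = 0}

/-!
Orthogonality of the covariates diagonalises the normal equations
`∫ X_j (Y - ∑ i, X_i β_i) = 0` into `β_j ∫ X_j² = ∫ X_j Y`, and `∫ X_j² ≠ 0` because `X_j` is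
not almost surely zero. Hence `P ∈ 𝒮_β` exactly when `P` lies in the model and `β` is its
coefficient vector `β_j = ∫ X_j Y / ∫ X_j²`; both disjointness and the covering follow.
-/

section FundamentalRandomVector

variable {Ω : Type*} [MeasurableSpace Ω] {P : Measure Ω} {k : ℕ}

lemma integral_mul_self_ne_zero_of_not_ae_eq_zero {f : Ω → ℝ} (hf : MemLp f 2 P)
    (h0 : ¬ f =ᵐ[P] 0) : ∫ ω, f ω * f ω ∂P ≠ 0 := by
  intro h
  refine h0 ?_
  filter_upwards [(integral_eq_zero_iff_of_nonneg (fun ω => mul_self_nonneg (f ω))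
    (hf.integrable_mul hf)).mp h] with ω hω
  exact mul_self_eq_zero.mp hω

lemma not_ae_eq_zero_iff_measure_lt_one [IsProbabilityMeasure P] {f : Ω → ℝ}
    (hf : Measurable f) : ¬ f =ᵐ[P] 0 ↔ P {ω | f ω = 0} < 1 := by
  have hzero : f =ᵐ[P] 0 ↔ P {ω | f ω = 0} = 1 := by
    rw [← measure_univ (μ := P)]
    exact ae_iff_measure_eq (hf (measurableSet_singleton 0)).nullMeasurableSet
  rw [hzero, lt_iff_le_and_ne]
  exact ⟨fun h => ⟨prob_le_one, h⟩, And.right⟩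

/-- For orthogonal covariates, the coefficients of the orthogonal projection of `Y` onto their
span. -/
noncomputable def regressionCoeff (P : Measure Ω) (Y : Ω → ℝ) (X : Fin k → Ω → ℝ) :
    Fin k → ℝ :=
  fun j => (∫ ω, X j ω * Y ω ∂P) / ∫ ω, X j ω * X j ω ∂P

lemma integral_mul_sub_sum_of_orthogonal {Y : Ω → ℝ} {X : Fin k → Ω → ℝ}
    (hY : MemLp Y 2 P) (hX : ∀ j, MemLp (X j) 2 P)
    (horth : ∀ j j', j ≠ j' → ∫ ω, X j ω * X j' ω ∂P = 0) (β : Fin k → ℝ) (j : Fin k) :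
    ∫ ω, X j ω * (Y ω - ∑ i, X i ω * β i) ∂P
      = ∫ ω, X j ω * Y ω ∂P - β j * ∫ ω, X j ω * X j ω ∂P := by
  have hprod : ∀ i, Integrable (fun ω => X j ω * X i ω * β i) P :=
    fun i => ((hX j).integrable_mul (hX i)).mul_const (β i)
  calc ∫ ω, X j ω * (Y ω - ∑ i, X i ω * β i) ∂P
      = ∫ ω, (X j ω * Y ω - ∑ i, X j ω * X i ω * β i) ∂P := by
        simp only [mul_sub, Finset.mul_sum, mul_assoc]
    _ = ∫ ω, X j ω * Y ω ∂P - ∑ i, (∫ ω, X j ω * X i ω ∂P) * β i := by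
        have hXY : Integrable (fun ω => X j ω * Y ω) P := (hX j).integrable_mul hY
        rw [integral_sub hXY (integrable_finsetSum _ fun i _ => hprod i),
          integral_finsetSum _ fun i _ => hprod i]
        simp only [integral_mul_const]
    _ = ∫ ω, X j ω * Y ω ∂P - β j * ∫ ω, X j ω * X j ω ∂P := by
        rw [Finset.sum_eq_single j (fun i _ hij => by rw [horth j i (Ne.symm hij), zero_mul])
          (by simp), mul_comm]

namespace IsFundamentalRandomVector

variable {Y : Ω → ℝ} {X : Fin k → Ω → ℝ}

lemma memLp_residual (h : IsFundamentalRandomVector P Y X) (β : Fin k → ℝ) :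
    MemLp (fun ω => Y ω - ∑ i, X i ω * β i) 2 P :=
  h.1.sub <| memLp_finsetSum _ fun i _ => (h.2.1 i).mul_const (β i)

lemma integral_mul_residual_eq_zero_iff (h : IsFundamentalRandomVector P Y X)
    (β : Fin k → ℝ) :
    (∀ j, ∫ ω, X j ω * (Y ω - ∑ i, X i ω * β i) ∂P = 0) ↔ β = regressionCoeff P Y X := by
  obtain ⟨hY, hX, hX0, horth⟩ := h
  simp only [integral_mul_sub_sum_of_orthogonal hY hX horth, sub_eq_zero, funext_iff,
    regressionCoeff, eq_div_iff (integral_mul_self_ne_zero_of_not_ae_eq_zero (hX _) (hX0 _))]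
  exact forall_congr' fun j => eq_comm

end IsFundamentalRandomVector

end FundamentalRandomVector

lemma mem_Mreg_iff {k : ℕ} {P : Measure (Fin (k + 1) → ℝ)} :
    P ∈ Mreg k ↔ IsProbabilityMeasure P ∧
      IsFundamentalRandomVector P (fun x => x 0) (fun j x => x j.succ) := by
  refine ⟨fun ⟨hP, hnull, hX, horth⟩ => ⟨hP, hX 0, fun j => hX j.succ, fun j => ?_, horth⟩,
    fun ⟨hP, hY, hX, hX0, horth⟩ => ⟨hP, fun j => ?_, Fin.cases hY hX, horth⟩⟩
  · exact (not_ae_eq_zero_iff_measure_lt_one (measurable_pi_apply _)).mpr (hnull j)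
  · exact (not_ae_eq_zero_iff_measure_lt_one (measurable_pi_apply _)).mp (hX0 j)

lemma mem_Sset_iff {k : ℕ} {β : Fin k → ℝ} {P : Measure (Fin (k + 1) → ℝ)} :
    P ∈ Sset k β ↔ P ∈ Mreg k ∧ β = regressionCoeff P (fun x => x 0) (fun j x => x j.succ) := by
  rw [mem_Mreg_iff]
  constructor
  · rintro ⟨hP, hF, -, hnormal⟩
    exact ⟨⟨hP, hF⟩, (hF.integral_mul_residual_eq_zero_iff β).mp hnormal⟩
  · rintro ⟨⟨hP, hF⟩, hβ⟩
    exact ⟨hP, hF, hF.memLp_residual β, (hF.integral_mul_residual_eq_zero_iff β).mpr hβ⟩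

theorem stmt13_general (k : ℕ) :
    (∀ β β' : Fin k → ℝ, β ≠ β' → Sset k β ∩ Sset k β' = ∅) ∧
    Mreg k = ⋃ β : Fin k → ℝ, Sset k β := by
  constructor
  · intro β β' hne
    refine Set.eq_empty_of_forall_notMem fun P ⟨hP, hP'⟩ => hne ?_
    exact (mem_Sset_iff.mp hP).2.trans (mem_Sset_iff.mp hP').2.symm
  · ext P
    simp only [Set.mem_iUnion, mem_Sset_iff, exists_eq_right]

/-- **Theorem 5 (parametrized representation of the stochastic linear regression
model).** The sets `𝒮_β` are pairwise disjoint, and `𝓜_reg^{1,k} = ⋃_β 𝒮_β`. -/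
theorem stmt13 (k : ℕ) (hk : 0 < k) :
    (∀ β β' : Fin k → ℝ, β ≠ β' → Sset k β ∩ Sset k β' = ∅) ∧
    Mreg k = ⋃ β : Fin k → ℝ, Sset k β :=
  stmt13_general k
end
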